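/- arXiv:1502.07253 — 2 statements merged into one kernel-verified Lean document; each statement's English description precedes it below -/
import Mathlib

section
/- Let Ω ⊆ ℝ² be an r-set, f ∈ W^{1,1}(Ω, ℝ²), let AB be a side of type A of the grid of Ω, let ε ≪ 1, and let M ∈ ℝ^{2×2}. Let ℛ ⊆ Ω be the union of the 6 squares of the grid having A or B as a vertex, and set Γ(A, B, M) = {(x, y) ∈ I_ε(A) × I_ε(B) : ∫_{xy} |Df − M| dℋ¹ > (25/(εr)) ∫_ℛ |Df − M| dℋ²}, where the inner integral is along the segment xy. Then ℋ¹({x ∈ I_ε(A) : ℋ¹({y ∈ I_ε(B) : (x,y) ∈ Γ}) > ℋ¹(I_ε(B))/5}) < ℋ¹(I_ε(A))/5. -/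
set_option autoImplicit false

open MeasureTheory Set Metric
open scoped ENNReal NNReal Classical

noncomputable section

/-- The Euclidean plane. -/
abbrev E2 := EuclideanSpace ℝ (Fin 2)

/-- The point of the plane with coordinates `(a, b)`. -/
def pt (a b : ℝ) : E2 := WithLp.toLp 2 ![a, b]

/-- The open axis-parallel square with center `c` and half-side `r`. -/
def sqO (c : E2) (r : ℝ) : Set E2 := {x | |x 0 - c 0| < r ∧ |x 1 - c 1| < r}

/-- The closed axis-parallel square with center `c` and half-side `r`. -/
def sqC (c : E2) (r : ℝ) : Set E2 := {x | |x 0 - c 0| ≤ r ∧ |x 1 - c 1| ≤ r}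

/-- The boundary of the axis-parallel square with center `c` and half-side `r`. -/
def sqBd (c : E2) (r : ℝ) : Set E2 := sqC c r \ sqO c r

/-- A choice of (unit) tangent vector at the points of the boundary of an axis-parallel
square centered at `c`: the horizontal unit vector on the two horizontal sides, the vertical
unit vector on the two vertical sides (and at the corners, which are `ℋ¹`-negligible). -/
def sqTangent (c : E2) (x : E2) : E2 :=
  if |x 0 - c 0| < |x 1 - c 1| then EuclideanSpace.single 0 1 else EuclideanSpace.single 1 1

/-- `f` belongs to the Sobolev space `W^{1,1}(Ω, ℝ²)`: it is integrable on `Ω`, a.e.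
differentiable on `Ω`, and its differential is integrable on `Ω`. -/
def MemW11 (Ω : Set E2) (f : E2 → E2) : Prop :=
  IntegrableOn f Ω volume ∧ (∀ᵐ x ∂(volume.restrict Ω), DifferentiableAt ℝ f x) ∧
    IntegrableOn (fun x => fderiv ℝ f x) Ω volume

/-- `f` is a homeomorphism between `Ω` and `f(Ω)`. -/
def IsHomeoOnto (f : E2 → E2) (Ω : Set E2) : Prop :=
  ∃ e : Ω ≃ₜ (f '' Ω), ∀ x : Ω, (e x : E2) = f x

/-- `g` is piecewise linear on the set `C`: `C` is a finite union of segments, on each of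
which `g` coincides with an affine map. -/
def PiecewiseLinearOn (g : E2 → E2) (C : Set E2) : Prop :=
  ∃ (n : ℕ) (P Q : Fin n → E2), (⋃ i, segment ℝ (P i) (Q i)) = C ∧
    ∀ i, ∃ φ : E2 →ᵃ[ℝ] E2, EqOn g φ (segment ℝ (P i) (Q i))

/-- `h` is finitely piecewise affine on the (closed) set `S`: there is a finite triangulation
of `S` (nondegenerate triangles with pairwise disjoint interiors whose union is `S`) such that
`h` coincides with an affine map on each triangle. -/
def FinitelyPiecewiseAffineOn (h : E2 → E2) (S : Set E2) : Prop :=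
  ∃ (n : ℕ) (T : Fin n → Fin 3 → E2),
    (∀ i, AffineIndependent ℝ (T i)) ∧
    (⋃ i, convexHull ℝ (range (T i))) = S ∧
    (∀ i j, i ≠ j →
      interior (convexHull ℝ (range (T i))) ∩ interior (convexHull ℝ (range (T j))) = ∅) ∧
    (∀ i, ∃ φ : E2 →ᵃ[ℝ] E2, EqOn h φ (convexHull ℝ (range (T i))))

/-- The `W^{1,1}(Ω)` distance of `f` and `g` : the `L¹` norm of `f - g` plus the `L¹` norm
of `Df - Dg`. -/
def W11dist (Ω : Set E2) (f g : E2 → E2) : ℝ≥0∞ :=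
  eLpNorm (fun x => f x - g x) 1 (volume.restrict Ω) +
    eLpNorm (fun x => fderiv ℝ f x - fderiv ℝ g x) 1 (volume.restrict Ω)

/-- The `L^∞(Ω)` distance of `f` and `g`. -/
def LinfDist (Ω : Set E2) (f g : E2 → E2) : ℝ≥0∞ :=
  eLpNorm (fun x => f x - g x) ⊤ (volume.restrict Ω)

/-- The closed square of the grid of mesh `2r` indexed by the lattice point `q ∈ ℤ²`,
namely `[2rq₁, 2rq₁+2r] × [2rq₂, 2rq₂+2r]`. -/
def cell (r : ℝ) (q : ℤ × ℤ) : Set E2 :=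
  {x | x 0 ∈ Icc (2*r*(q.1:ℝ)) (2*r*(q.1:ℝ) + 2*r) ∧ x 1 ∈ Icc (2*r*(q.2:ℝ)) (2*r*(q.2:ℝ) + 2*r)}

/-- The `r`-set determined by the finite family `C` of lattice squares: the finite union of the
(essentially disjoint) closed squares of side `2r` indexed by `C`. -/
def Rset (r : ℝ) (C : Finset (ℤ × ℤ)) : Set E2 := ⋃ q ∈ C, cell r q

/-- The vertex of the grid of mesh `2r` at the lattice point `p`. -/
def vtx (r : ℝ) (p : ℤ × ℤ) : E2 := pt (2*r*(p.1:ℝ)) (2*r*(p.2:ℝ))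

/-- The lattice point `p` is a corner of the cell indexed by `q`. -/
def isCorner (p q : ℤ × ℤ) : Prop := p = q ∨ p = q + (1,0) ∨ p = q + (0,1) ∨ p = q + (1,1)

/-- The union `ℛ` of the squares of the grid of the `r`-set having (the vertex at) `p` or `p'`
as one vertex. -/
def Rnb (r : ℝ) (C : Finset (ℤ × ℤ)) (p p' : ℤ × ℤ) : Set E2 :=
  ⋃ q ∈ C, ⋃ (_ : isCorner p q ∨ isCorner p' q), cell r q

/-- The segment from the vertex at `p` to the vertex at `p'` is a side (an edge) of the grid of
the `r`-set determined by `C`. -/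
def isEdge (C : Finset (ℤ × ℤ)) (p p' : ℤ × ℤ) : Prop :=
  (p' = p + (1,0) ∧ (p ∈ C ∨ p - (0,1) ∈ C)) ∨ (p' = p + (0,1) ∧ (p ∈ C ∨ p - (1,0) ∈ C))

/-- The segment `I_ε(V)` of length `2√2 εr` centered at `V` with direction `π/4`, used for
vertices of type A. -/
def IsegA (r ε : ℝ) (V : E2) : Set E2 :=
  segment ℝ (V - (ε*r) • pt 1 1) (V + (ε*r) • pt 1 1)

/-!
Let `g = |Df - M|` and parametrize `I_ε(A)`, `I_ε(B)` by `a, b ∈ [-c, c]`, `c = εr`, along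
`v = (1, 1)`. Over the segment from `A + a v` to `B + b v`,
`∫ g dℋ¹ = |B - A + (b - a) v| ∫₀¹ g(A + a v + u (B - A + (b - a) v)) du`.
Integrating this over a set `S` of pairs `(a, b)` and substituting `t = b - a`, `s = a + u t`
(a shear) gives `∫₀¹ ∫_{-c}^{c} w(u, s) g(A + u (B - A) + s v) ds du`, where `w(u, s)` integrates
`|B - A + t v|` over the `t` with `(s - u t, s - u t + t) ∈ S`; when the first coordinates of `S`
lie in a set of measure `X`, `w ≤ 2r (X + 2c) + 5c²/2`. The points `A + u (B - A) + s v` sweep a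
parallelogram of area `4rc` inside `ℛ`, so the integral over `S` is at most
`(X + 2c + 5c²/(4r)) ∫_ℛ g`. If the bad starting points had measure `X ≥ 2c/5`, the bad pairs
would have measure at least `2cX/5`, and Chebyshev would bound the same integral from below by
`10 X ∫_ℛ g`; this is impossible since `c < r`.
-/

open Filter Topology

theorem sep_image {α β : Type*} (f : α → β) (s : Set α) (p : β → Prop) :
    {y ∈ f '' s | p y} = f '' {x ∈ s | p (f x)} :=
  (image_inter_preimage f s {y | p y}).symm

theorem mul_measure_le_prod_apply {α β : Type*} [MeasurableSpace α] [MeasurableSpace β]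
    {μ : Measure α} {ν : Measure β} [SFinite ν] {S : Set (α × β)} (hS : MeasurableSet S)
    {O : Set α} (hO : MeasurableSet O) {k : ℝ≥0∞} (h : ∀ a ∈ O, k ≤ ν (Prod.mk a ⁻¹' S)) :
    k * μ O ≤ μ.prod ν S := by
  rw [Measure.prod_apply hS, ← setLIntegral_const]
  exact (setLIntegral_mono' hO h).trans (setLIntegral_le_lintegral _ _)

theorem mul_measure_lt_setLIntegral {α : Type*} [MeasurableSpace α] {μ : Measure α} {S : Set α}
    {f : α → ℝ≥0∞} {τ : ℝ≥0∞} (hS : MeasurableSet S) (hf : Measurable f) (hS₀ : μ S ≠ 0)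
    (hS_top : μ S ≠ ⊤) (hτ : τ ≠ ⊤) (h : ∀ x ∈ S, τ < f x) :
    τ * μ S < ∫⁻ x in S, f x ∂μ := by
  rw [← setLIntegral_const]
  refine setLIntegral_strict_mono hS hS₀ hf ?_ (ae_of_all _ h)
  rw [setLIntegral_const]
  exact ENNReal.mul_ne_top hτ hS_top

section Line

variable {E : Type*} [NormedAddCommGroup E] [NormedSpace ℝ E]

theorem segment_sub_smul_add_smul (P v : E) {c : ℝ} (hc : 0 ≤ c) :
    segment ℝ (P - c • v) (P + c • v) = (fun t : ℝ => P + t • v) '' Icc (-c) c := by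
  have hφ : (fun t : ℝ => P + t • v) = AffineMap.lineMap P (P + v) := by
    ext1 t; rw [AffineMap.lineMap_apply_module', add_sub_cancel_left, add_comm]
  rw [← segment_eq_Icc (by linarith), hφ, image_segment, ← hφ]
  simp only [neg_smul, ← sub_eq_add_neg]

variable [MeasurableSpace E] [BorelSpace E]

theorem hausdorffMeasure_image_add_smul (P v : E) (S : Set ℝ) :
    μH[1] ((fun t : ℝ => P + t • v) '' S) = ‖v‖ₑ * volume S := by
  have : (fun t : ℝ => P + t • v) '' S = IsometryEquiv.addLeft P '' ((· • v) '' S) := by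
    rw [image_image]; rfl
  rw [this, IsometryEquiv.hausdorffMeasure_image, hausdorffMeasure_smul_right_image,
    hausdorffMeasure_real, ENNReal.smul_def, smul_eq_mul, enorm_eq_nnnorm]

theorem restrict_hausdorffMeasure_image_add_smul (P v : E) (S : Set ℝ) :
    μH[1].restrict ((fun t : ℝ => P + t • v) '' S) =
      (‖v‖ₑ • volume.restrict S).map (fun t : ℝ => P + t • v) := by
  have hm : Measurable (fun t : ℝ => P + t • v) := by fun_prop
  ext T hT
  rw [Measure.restrict_apply hT, Measure.map_apply hm hT, Measure.smul_apply,
    Measure.restrict_apply (hm hT), inter_comm, ← image_inter_preimage,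
    hausdorffMeasure_image_add_smul, smul_eq_mul, inter_comm]

theorem setLIntegral_image_add_smul (P v : E) (S : Set ℝ) {g : E → ℝ≥0∞} (hg : Measurable g) :
    ∫⁻ z in (fun t : ℝ => P + t • v) '' S, g z ∂μH[1] = ‖v‖ₑ * ∫⁻ t in S, g (P + t • v) := by
  rw [restrict_hausdorffMeasure_image_add_smul, lintegral_map hg (by fun_prop),
    lintegral_smul_measure, smul_eq_mul]

theorem setLIntegral_segment (x y : E) {g : E → ℝ≥0∞} (hg : Measurable g) :
    ∫⁻ z in segment ℝ x y, g z ∂μH[1] = ‖y - x‖ₑ * ∫⁻ u in Icc (0:ℝ) 1, g (x + u • (y - x)) := by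
  rw [segment_eq_image']
  exact setLIntegral_image_add_smul x (y - x) _ hg

end Line

section Shear

theorem volume_setOf_add_mul_mem (s : ℝ) {a : ℝ} (ha : a ≠ 0) (S : Set ℝ) :
    volume {t | s + a * t ∈ S} = ENNReal.ofReal |a⁻¹| * volume S := by
  change volume ((a * ·) ⁻¹' ((s + ·) ⁻¹' S)) = _
  rw [Real.volume_preimage_mul_left ha, measure_preimage_add]

theorem setLIntegral_Ioc_ofReal_mul {k a : ℝ} (hk : 0 ≤ k) (ha : 0 ≤ a) :
    ∫⁻ t in Ioc 0 a, ENNReal.ofReal (k * t) = ENNReal.ofReal (k * a ^ 2 / 2) := by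
  rw [← ofReal_integral_eq_lintegral_ofReal
      (by fun_prop : Continuous fun t : ℝ => k * t).integrableOn_Ioc
      ((ae_restrict_iff' measurableSet_Ioc).2 (ae_of_all _ fun t ht =>
        mul_nonneg hk ht.1.le)),
    ← intervalIntegral.integral_of_le ha, intervalIntegral.integral_const_mul, integral_id]
  ring_nf

theorem lintegral_prod_shear {F : ℝ × ℝ → ℝ≥0∞} (hF : Measurable F) (u : ℝ) :
    ∫⁻ q, F q ∂(volume.prod volume) = ∫⁻ s, ∫⁻ t, F (s - u * t, s - u * t + t) := by
  calc ∫⁻ q, F q ∂(volume.prod volume)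
      = ∫⁻ a, ∫⁻ b, F (a, b) := lintegral_prod _ hF.aemeasurable
    _ = ∫⁻ a, ∫⁻ t, F (a, a + t) := lintegral_congr fun a =>
        (lintegral_add_left_eq_self (fun b => F (a, b)) a).symm
    _ = ∫⁻ t, ∫⁻ a, F (a, a + t) :=
        lintegral_lintegral_swap (hF.comp (by fun_prop)).aemeasurable
    _ = ∫⁻ t, ∫⁻ s, F (s - u * t, s - u * t + t) := lintegral_congr fun t =>
        (lintegral_sub_right_eq_self (fun a => F (a, a + t)) (u * t)).symm
    _ = _ := lintegral_lintegral_swap (hF.comp (by fun_prop)).aemeasurable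

variable {O : Set ℝ} {c u : ℝ}

theorem volume_shear_fiber_le {X : ℝ} (hO : volume O = ENNReal.ofReal X) (hX : 0 ≤ X)
    (hc : 0 < c) (hu : u ∈ Icc (0:ℝ) 1) (s : ℝ) :
    volume {t | s - u * t ∈ O ∧ s - u * t + t ∈ Icc (-c) c} ≤ ENNReal.ofReal (X + 2 * c) := by
  obtain ⟨hu0, hu1⟩ := hu
  -- the fiber is controlled through `O` when `u` is large and through `Icc (-c) c` otherwise
  rcases lt_or_ge X (u * (X + 2 * c)) with h | h
  · have hu : 0 < u := by nlinarith
    calc volume {t | s - u * t ∈ O ∧ s - u * t + t ∈ Icc (-c) c}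
        ≤ volume {t | s + -u * t ∈ O} := measure_mono fun t ht =>
          show s + -u * t ∈ O by rw [neg_mul, ← sub_eq_add_neg]; exact ht.1
      _ = ENNReal.ofReal (u⁻¹ * X) := by
          rw [volume_setOf_add_mul_mem s (neg_ne_zero.2 hu.ne') O, hO, inv_neg, abs_neg,
            abs_of_pos (inv_pos.2 hu), ENNReal.ofReal_mul (inv_nonneg.2 hu.le)]
      _ ≤ ENNReal.ofReal (X + 2 * c) := by
          gcongr; rw [inv_mul_le_iff₀ hu]; linarith
  · have hu : 0 < 1 - u := by nlinarith
    calc volume {t | s - u * t ∈ O ∧ s - u * t + t ∈ Icc (-c) c}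
        ≤ volume {t | s + (1 - u) * t ∈ Icc (-c) c} := measure_mono fun t ht =>
          show s + (1 - u) * t ∈ Icc (-c) c by convert ht.2 using 1; ring
      _ = ENNReal.ofReal ((1 - u)⁻¹ * (2 * c)) := by
          rw [volume_setOf_add_mul_mem s hu.ne' _, Real.volume_Icc, abs_of_pos (inv_pos.2 hu),
            ENNReal.ofReal_mul (inv_nonneg.2 hu.le)]
          ring_nf
      _ ≤ ENNReal.ofReal (X + 2 * c) := by
          gcongr; rw [inv_mul_le_iff₀ hu]; nlinarith

theorem setLIntegral_shear_fiber_le_indicator {S : Set (ℝ × ℝ)} (hSO : S ⊆ O ×ˢ Icc (-c) c)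
    (hOI : O ⊆ Icc (-c) c) (hu : u ∈ Icc (0:ℝ) 1) {w : ℝ → ℝ≥0∞} {K : ℝ≥0∞}
    (hK : ∀ s, ∫⁻ t in {t | s - u * t ∈ O ∧ s - u * t + t ∈ Icc (-c) c}, w t ≤ K) (s : ℝ) :
    ∫⁻ t in {t | (s - u * t, s - u * t + t) ∈ S}, w t ≤ (Icc (-c) c).indicator (fun _ => K) s := by
  by_cases hs : s ∈ Icc (-c) c
  · have hsub : {t | (s - u * t, s - u * t + t) ∈ S} ⊆
        {t | s - u * t ∈ O ∧ s - u * t + t ∈ Icc (-c) c} := fun t ht => hSO ht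
    rw [indicator_of_mem hs]
    exact (lintegral_mono_set hsub).trans (hK s)
  · have hempty : {t | (s - u * t, s - u * t + t) ∈ S} = ∅ := by
      refine eq_empty_of_forall_notMem fun t ht => hs ?_
      obtain ⟨ha, hb⟩ := hSO ht
      have ha := hOI ha
      constructor <;> nlinarith [ha.1, ha.2, hb.1, hb.2, hu.1, hu.2]
    rw [hempty, Measure.restrict_empty, lintegral_zero_measure]
    exact zero_le

end Shear

section Crofton

variable {E : Type*} [NormedAddCommGroup E] [NormedSpace ℝ E] {O : Set ℝ} {c : ℝ}

theorem setLIntegral_norm_add_smul_le {e v : E} {r X u : ℝ} (hOm : MeasurableSet O)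
    (hOI : O ⊆ Icc (-c) c) (hO : volume O = ENNReal.ofReal X) (hX : 0 ≤ X) (hc : 0 < c)
    (hr : 0 ≤ r) (hu : u ∈ Icc (0:ℝ) 1)
    (hnorm : ∀ t, |t| ≤ 2 * c → ‖e + t • v‖ ≤ 2 * r + 5 / 4 * max t 0) (s : ℝ) :
    ∫⁻ t in {t | s - u * t ∈ O ∧ s - u * t + t ∈ Icc (-c) c}, ‖e + t • v‖ₑ
      ≤ ENNReal.ofReal (2 * r * (X + 2 * c) + 5 / 2 * c ^ 2) := by
  set F := {t | s - u * t ∈ O ∧ s - u * t + t ∈ Icc (-c) c}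
  have hF : MeasurableSet F :=
    (hOm.preimage (by fun_prop)).inter (measurableSet_Icc.preimage (by fun_prop))
  set ramp := (Ioc 0 (2 * c)).indicator fun t => ENNReal.ofReal (5 / 4 * t)
  have hpt : ∀ t ∈ F, ‖e + t • v‖ₑ ≤ ENNReal.ofReal (2 * r) + ramp t := by
    rintro t ⟨ha, hb⟩
    have ha := hOI ha
    have ht : |t| ≤ 2 * c := abs_le.2 ⟨by linarith [ha.2, hb.1], by linarith [ha.1, hb.2]⟩
    rw [← ofReal_norm]
    dsimp only [ramp]
    rcases le_or_gt t 0 with h | h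
    · rw [indicator_of_notMem (fun h' => h.not_gt h'.1), add_zero]
      gcongr
      simpa [max_eq_right h] using hnorm t ht
    · rw [indicator_of_mem (show t ∈ Ioc 0 (2 * c) from ⟨h, (abs_le.1 ht).2⟩),
        ← ENNReal.ofReal_add (by linarith) (by linarith)]
      gcongr
      simpa [max_eq_left h.le] using hnorm t ht
  calc ∫⁻ t in F, ‖e + t • v‖ₑ
      ≤ ∫⁻ t in F, (ENNReal.ofReal (2 * r) + ramp t) := setLIntegral_mono' hF hpt
    _ ≤ ENNReal.ofReal (2 * r) * volume F + ∫⁻ t in Ioc 0 (2 * c), ENNReal.ofReal (5 / 4 * t) := by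
        rw [lintegral_add_left measurable_const, setLIntegral_const, mul_comm,
          ← lintegral_indicator measurableSet_Ioc]
        gcongr
        exact Measure.restrict_le_self
    _ ≤ ENNReal.ofReal (2 * r) * ENNReal.ofReal (X + 2 * c) + ENNReal.ofReal (5 / 2 * c ^ 2) := by
        rw [setLIntegral_Ioc_ofReal_mul (by norm_num) (by linarith)]
        gcongr
        · exact volume_shear_fiber_le hO hX hc hu s
        · exact le_of_eq (by ring)
    _ = _ := by
        rw [← ENNReal.ofReal_mul (by linarith),
          ← ENNReal.ofReal_add (by positivity) (by positivity)]

variable [MeasurableSpace E] [BorelSpace E] {A B v : E} {g : E → ℝ≥0∞}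

theorem setLIntegral_segment_add_smul (hg : Measurable g) (a b : ℝ) :
    ∫⁻ z in segment ℝ (A + a • v) (B + b • v), g z ∂μH[1] =
      ‖B - A + (b - a) • v‖ₑ * ∫⁻ u in Icc (0:ℝ) 1, g (A + a • v + u • (B - A + (b - a) • v)) := by
  rw [setLIntegral_segment _ _ hg, show B + b • v - (A + a • v) = B - A + (b - a) • v by module]

theorem measurable_setLIntegral_segment_add_smul (hg : Measurable g) :
    Measurable fun q : ℝ × ℝ => ∫⁻ z in segment ℝ (A + q.1 • v) (B + q.2 • v), g z ∂μH[1] := by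
  simp_rw [setLIntegral_segment_add_smul hg]
  refine (by fun_prop : Measurable fun q : ℝ × ℝ => ‖B - A + (q.2 - q.1) • v‖ₑ).mul ?_
  exact (hg.comp (by fun_prop : Continuous fun p : (ℝ × ℝ) × ℝ =>
    A + p.1.1 • v + p.2 • (B - A + (p.1.2 - p.1.1) • v)).measurable).lintegral_prod_right'

theorem setLIntegral_shear_le (hg : Measurable g) {u : ℝ} {K : ℝ≥0∞} {S : Set (ℝ × ℝ)}
    (hS : MeasurableSet S) (hSO : S ⊆ O ×ˢ Icc (-c) c) (hOI : O ⊆ Icc (-c) c)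
    (hu : u ∈ Icc (0:ℝ) 1)
    (hK : ∀ s, ∫⁻ t in {t | s - u * t ∈ O ∧ s - u * t + t ∈ Icc (-c) c}, ‖B - A + t • v‖ₑ ≤ K) :
    ∫⁻ q in S, ‖B - A + (q.2 - q.1) • v‖ₑ * g (A + q.1 • v + u • (B - A + (q.2 - q.1) • v))
        ∂(volume.prod volume)
      ≤ K * ∫⁻ s in Icc (-c) c, g (A + u • (B - A) + s • v) := by
  set H := fun q : ℝ × ℝ =>
    ‖B - A + (q.2 - q.1) • v‖ₑ * g (A + q.1 • v + u • (B - A + (q.2 - q.1) • v))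
  have hH : Measurable H :=
    (by fun_prop : Measurable fun q : ℝ × ℝ => ‖B - A + (q.2 - q.1) • v‖ₑ).mul
      (hg.comp (by fun_prop : Continuous fun q : ℝ × ℝ =>
        A + q.1 • v + u • (B - A + (q.2 - q.1) • v)).measurable)
  have hζ : Measurable fun s : ℝ => g (A + u • (B - A) + s • v) :=
    hg.comp (by fun_prop : Continuous fun s : ℝ => A + u • (B - A) + s • v).measurable
  set fiber := fun s => {t : ℝ | (s - u * t, s - u * t + t) ∈ S}
  have hfiber : ∀ s, MeasurableSet (fiber s) := fun s => hS.preimage (by fun_prop)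
  -- after the shear, the integrand is a weight in `t` times `g` at the point `s` of the strip
  have hfactor : ∀ s t, S.indicator H (s - u * t, s - u * t + t) =
      (fiber s).indicator (fun t => ‖B - A + t • v‖ₑ) t * g (A + u • (B - A) + s • v) := by
    intro s t
    by_cases h : (s - u * t, s - u * t + t) ∈ S
    · simp only [indicator, fiber, mem_ofPred_eq, h, if_true, H, add_sub_cancel_left]
      congr 2
      module
    · simp only [indicator, fiber, mem_ofPred_eq, h, if_false, zero_mul]
  calc ∫⁻ q in S, H q ∂(volume.prod volume)
      = ∫⁻ s, (∫⁻ t in fiber s, ‖B - A + t • v‖ₑ) * g (A + u • (B - A) + s • v) := by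
        rw [← lintegral_indicator hS, lintegral_prod_shear (hH.indicator hS) u]
        refine lintegral_congr fun s => ?_
        simp_rw [hfactor]
        rw [lintegral_mul_const _ ((by fun_prop : Measurable fun t : ℝ =>
          ‖B - A + t • v‖ₑ).indicator (hfiber s)), lintegral_indicator (hfiber s)]
    _ ≤ ∫⁻ s, (Icc (-c) c).indicator (fun _ => K) s * g (A + u • (B - A) + s • v) :=
        lintegral_mono fun s => by
          gcongr; exact setLIntegral_shear_fiber_le_indicator hSO hOI hu hK s
    _ = K * ∫⁻ s in Icc (-c) c, g (A + u • (B - A) + s • v) := by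
        rw [← lintegral_indicator measurableSet_Icc,
          ← lintegral_const_mul K (hζ.indicator measurableSet_Icc)]
        refine lintegral_congr fun s => ?_
        by_cases hs : s ∈ Icc (-c) c <;> simp [hs]

theorem setLIntegral_setLIntegral_segment_le (hg : Measurable g) {k : ℝ} {S : Set (ℝ × ℝ)}
    (hS : MeasurableSet S) (hSO : S ⊆ O ×ˢ Icc (-c) c) (hOI : O ⊆ Icc (-c) c)
    (hK : ∀ u ∈ Icc (0:ℝ) 1, ∀ s, ∫⁻ t in {t | s - u * t ∈ O ∧ s - u * t + t ∈ Icc (-c) c},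
      ‖B - A + t • v‖ₑ ≤ ENNReal.ofReal k) :
    ∫⁻ q in S, ∫⁻ z in segment ℝ (A + q.1 • v) (B + q.2 • v), g z ∂μH[1] ∂(volume.prod volume)
      ≤ ENNReal.ofReal k *
          ∫⁻ u in Icc (0:ℝ) 1, ∫⁻ s in Icc (-c) c, g (A + u • (B - A) + s • v) := by
  simp_rw [setLIntegral_segment_add_smul hg, ← lintegral_const_mul' _ _ enorm_ne_top]
  rw [lintegral_lintegral_swap ((by fun_prop : Measurable fun p : (ℝ × ℝ) × ℝ =>
      ‖B - A + (p.1.2 - p.1.1) • v‖ₑ).mul (hg.comp (by fun_prop : Continuous fun p : (ℝ × ℝ) × ℝ =>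
        A + p.1.1 • v + p.2 • (B - A + (p.1.2 - p.1.1) • v)).measurable)).aemeasurable,
    ← lintegral_const_mul' _ _ ENNReal.ofReal_ne_top]
  exact setLIntegral_mono' measurableSet_Icc fun u hu =>
    setLIntegral_shear_le hg hS hSO hOI hu (hK u hu)

theorem crofton_bound_le_chebyshev_bound {r X : ℝ} (hc : 0 < c) (hcr : c < r)
    (hX : 2 * c / 5 ≤ X) (G : ℝ≥0∞) :
    ENNReal.ofReal (2 * r * (X + 2 * c) + 5 / 2 * c ^ 2) * (ENNReal.ofReal (2 * r)⁻¹ * G)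
      ≤ ENNReal.ofReal (25 / c) * G * (ENNReal.ofReal (2 * c / 5) * ENNReal.ofReal X) := by
  have h10 : ENNReal.ofReal (25 / c) * (ENNReal.ofReal (2 * c / 5) * ENNReal.ofReal X)
      = ENNReal.ofReal (10 * X) := by
    rw [← ENNReal.ofReal_mul (by positivity), ← ENNReal.ofReal_mul (by positivity)]
    congr 1; field_simp; ring
  calc ENNReal.ofReal (2 * r * (X + 2 * c) + 5 / 2 * c ^ 2) * (ENNReal.ofReal (2 * r)⁻¹ * G)
      = ENNReal.ofReal ((2 * r * (X + 2 * c) + 5 / 2 * c ^ 2) * (2 * r)⁻¹) * G := by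
        rw [ENNReal.ofReal_mul (by nlinarith), ← mul_assoc]
    _ ≤ ENNReal.ofReal (10 * X) * G := by
        gcongr ENNReal.ofReal ?_ * _
        rw [← div_eq_mul_inv, div_le_iff₀ (by linarith)]
        nlinarith [mul_le_mul_of_nonneg_left hX (by linarith : (0:ℝ) ≤ r),
          mul_lt_mul_of_pos_right hcr hc]
    _ = _ := by rw [← h10]; ring

theorem volume_manyHeavySegments_lt (hg : Measurable g) {r : ℝ} (hc : 0 < c) (hcr : c < r)
    (hnorm : ∀ t, |t| ≤ 2 * c → ‖B - A + t • v‖ ≤ 2 * r + 5 / 4 * max t 0)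
    {G : ℝ≥0∞} (hG : G ≠ ⊤)
    (hstrip : ∫⁻ u in Icc (0:ℝ) 1, ∫⁻ s in Icc (-c) c, g (A + u • (B - A) + s • v)
      ≤ ENNReal.ofReal (2 * r)⁻¹ * G) :
    volume {a ∈ Icc (-c) c | ENNReal.ofReal (2 * c) / 5 < volume {b ∈ Icc (-c) c |
        ENNReal.ofReal (25 / c) * G < ∫⁻ z in segment ℝ (A + a • v) (B + b • v), g z ∂μH[1]}}
      < ENNReal.ofReal (2 * c) / 5 := by
  set I := Icc (-c) c
  set τ := ENNReal.ofReal (25 / c) * G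
  set L := fun q : ℝ × ℝ => ∫⁻ z in segment ℝ (A + q.1 • v) (B + q.2 • v), g z ∂μH[1]
  have hL : Measurable L := measurable_setLIntegral_segment_add_smul hg
  set T := {q : ℝ × ℝ | q.2 ∈ I ∧ τ < L q}
  have hT : MeasurableSet T := (measurable_snd measurableSet_Icc).inter (hL measurableSet_Ioi)
  set O := {a ∈ I | ENNReal.ofReal (2 * c) / 5 < volume (Prod.mk a ⁻¹' T)}
  have hOm : MeasurableSet O :=
    measurableSet_Icc.inter (measurable_measure_prodMk_left hT measurableSet_Ioi)
  change volume O < _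
  by_contra! hO
  have hOI : O ⊆ I := fun a ha => ha.1
  set S := Prod.fst ⁻¹' O ∩ T
  have hS : MeasurableSet S := (measurable_fst hOm).inter hT
  have hSO : S ⊆ O ×ˢ I := fun q hq => ⟨hq.1, hq.2.1⟩
  set X := (volume O).toReal
  have hOX : volume O = ENNReal.ofReal X :=
    (ENNReal.ofReal_toReal ((measure_mono hOI).trans_lt measure_Icc_lt_top).ne).symm
  have h2c5 : ENNReal.ofReal (2 * c) / 5 = ENNReal.ofReal (2 * c / 5) := by
    rw [ENNReal.ofReal_div_of_pos (by norm_num)]; norm_num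
  have hX : 2 * c / 5 ≤ X := by
    rwa [hOX, h2c5, ENNReal.ofReal_le_ofReal_iff ENNReal.toReal_nonneg] at hO
  have hlow : ENNReal.ofReal (2 * c / 5) * volume O ≤ (volume.prod volume) S :=
    mul_measure_le_prod_apply hS hOm fun a ha =>
      (h2c5 ▸ ha.2).le.trans (measure_mono fun b hb => ⟨ha, hb⟩)
  have hS₀ : (volume.prod volume) S ≠ 0 := by
    refine (lt_of_lt_of_le ?_ hlow).ne'
    rw [hOX]
    exact ENNReal.mul_pos (ENNReal.ofReal_pos.2 (by positivity)).ne'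
      (ENNReal.ofReal_pos.2 (by linarith)).ne'
  have hS_top : (volume.prod volume) S ≠ ⊤ := by
    refine ((measure_mono (hSO.trans (prod_mono hOI subset_rfl))).trans_lt ?_).ne
    rw [Measure.prod_prod]
    exact ENNReal.mul_lt_top measure_Icc_lt_top measure_Icc_lt_top
  refine (crofton_bound_le_chebyshev_bound hc hcr hX G).not_gt ?_
  calc τ * (ENNReal.ofReal (2 * c / 5) * ENNReal.ofReal X)
      ≤ τ * (volume.prod volume) S := by rw [← hOX]; gcongr
    _ < ∫⁻ q in S, L q ∂(volume.prod volume) :=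
        mul_measure_lt_setLIntegral hS hL hS₀ hS_top (ENNReal.mul_ne_top ENNReal.ofReal_ne_top hG)
          fun q hq => hq.2.2
    _ ≤ _ := by
        refine (setLIntegral_setLIntegral_segment_le hg hS hSO hOI fun u hu s => ?_).trans
          (by gcongr)
        exact setLIntegral_norm_add_smul_le hOm hOI hOX ENNReal.toReal_nonneg hc (by linarith) hu
          hnorm s

theorem hausdorffMeasure_manyHeavySegments_lt (hv : v ≠ 0) (hg : Measurable g) {r : ℝ}
    (hc : 0 < c) (hcr : c < r)
    (hnorm : ∀ t, |t| ≤ 2 * c → ‖B - A + t • v‖ ≤ 2 * r + 5 / 4 * max t 0)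
    {G : ℝ≥0∞} (hG : G ≠ ⊤)
    (hstrip : ∫⁻ u in Icc (0:ℝ) 1, ∫⁻ s in Icc (-c) c, g (A + u • (B - A) + s • v)
      ≤ ENNReal.ofReal (2 * r)⁻¹ * G) :
    μH[1] {x ∈ segment ℝ (A - c • v) (A + c • v) |
        μH[1] {y ∈ segment ℝ (B - c • v) (B + c • v) |
            ENNReal.ofReal (25 / c) * G < ∫⁻ z in segment ℝ x y, g z ∂μH[1]}
          > μH[1] (segment ℝ (B - c • v) (B + c • v)) / 5}
      < μH[1] (segment ℝ (A - c • v) (A + c • v)) / 5 := by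
  simp only [segment_sub_smul_add_smul _ _ hc.le, sep_image, hausdorffMeasure_image_add_smul,
    Real.volume_Icc, sub_neg_eq_add, ← two_mul, mul_div_assoc, gt_iff_lt,
    ENNReal.mul_lt_mul_iff_right (enorm_ne_zero.2 hv) enorm_ne_top]
  exact volume_manyHeavySegments_lt hg hc hcr hnorm hG hstrip

end Crofton

section Grid

theorem pt_apply_zero (a b : ℝ) : pt a b 0 = a := rfl

theorem pt_apply_one (a b : ℝ) : pt a b 1 = b := rfl

theorem pt_self_apply (a : ℝ) (i : Fin 2) : pt a a i = a := by
  fin_cases i <;> rfl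

theorem pt_add_smul_pt (a b a' b' t : ℝ) :
    pt a b + t • pt a' b' = pt (a + t * a') (b + t * b') := by
  ext i; fin_cases i <;> rfl

theorem norm_pt (a b : ℝ) : ‖pt a b‖ = √(a ^ 2 + b ^ 2) := by
  rw [EuclideanSpace.norm_eq, Fin.sum_univ_two]; simp [pt_apply_zero, pt_apply_one]

theorem vtx_sub_vtx (r : ℝ) (p d : ℤ × ℤ) :
    vtx r (p + d) - vtx r p = pt (2 * r * d.1) (2 * r * d.2) := by
  ext i; fin_cases i <;> simp [vtx, pt] <;> ring

theorem measurePreserving_coords : MeasurePreserving (fun x : E2 => (x 0, x 1)) :=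
  (volume_preserving_finTwoArrow ℝ).comp (PiLp.volume_preserving_ofLp (Fin 2))

theorem cell_eq_preimage_coords (r : ℝ) (q : ℤ × ℤ) : cell r q = (fun x : E2 => (x 0, x 1)) ⁻¹'
    (Icc (2 * r * q.1) (2 * r * q.1 + 2 * r) ×ˢ Icc (2 * r * q.2) (2 * r * q.2 + 2 * r)) := rfl

theorem measurableSet_cell (r : ℝ) (q : ℤ × ℤ) : MeasurableSet (cell r q) := by
  rw [cell_eq_preimage_coords]
  exact measurePreserving_coords.measurable (measurableSet_Icc.prod measurableSet_Icc)

theorem volume_cell_lt_top (r : ℝ) (q : ℤ × ℤ) : volume (cell r q) < ⊤ := by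
  rw [cell_eq_preimage_coords, measurePreserving_coords.measure_preimage
    (measurableSet_Icc.prod measurableSet_Icc).nullMeasurableSet, Measure.volume_eq_prod,
    Measure.prod_prod]
  exact ENNReal.mul_lt_top measure_Icc_lt_top measure_Icc_lt_top

variable {r : ℝ} {C : Finset (ℤ × ℤ)}

theorem Rnb_subset_Rset (p p' : ℤ × ℤ) : Rnb r C p p' ⊆ Rset r C :=
  iUnion₂_mono fun _ _ => iUnion_subset fun _ => subset_rfl

theorem measurableSet_Rnb (p p' : ℤ × ℤ) : MeasurableSet (Rnb r C p p') :=
  Finset.measurableSet_biUnion C fun q _ => MeasurableSet.iUnion fun _ => measurableSet_cell r q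

theorem volume_Rnb_lt_top (p p' : ℤ × ℤ) : volume (Rnb r C p p') < ⊤ :=
  (measure_mono (Rnb_subset_Rset p p')).trans_lt <| (measure_biUnion_finset_le C _).trans_lt <|
    ENNReal.sum_lt_top.2 fun q _ => volume_cell_lt_top r q

theorem isCorner_iff_le {p q : ℤ × ℤ} :
    isCorner p q ↔ q.1 ≤ p.1 ∧ p.1 ≤ q.1 + 1 ∧ q.2 ≤ p.2 ∧ p.2 ≤ q.2 + 1 := by
  simp only [isCorner, Prod.ext_iff, Prod.fst_add, Prod.snd_add]
  omega

theorem int_eq_of_mem_Icc_of_mem_Ioo (hr : 0 < r) {y : ℝ} {m n : ℤ}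
    (hn : y ∈ Icc (2 * r * n) (2 * r * n + 2 * r)) (hm : y ∈ Ioo (2 * r * m) (2 * r * m + 2 * r)) :
    n = m := by
  have h1 : (n : ℝ) < m + 1 := by nlinarith [hn.1, hm.2]
  have h2 : (m : ℝ) < n + 1 := by nlinarith [hn.2, hm.1]
  have : n < m + 1 := by exact_mod_cast h1
  have : m < n + 1 := by exact_mod_cast h2
  omega

theorem add_mul_sub_mem_Ioo (hr : 0 < r) {m n : ℤ} (h₁ : m ≤ n) (h₂ : n ≤ m + 1) {θ : ℝ}
    (hθ : θ ∈ Ioo (0:ℝ) 1) :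
    2 * r * n + θ * (2 * r * m + r - 2 * r * n) ∈ Ioo (2 * r * m) (2 * r * m + 2 * r) := by
  obtain rfl | rfl : n = m ∨ n = m + 1 := by omega
  all_goals push_cast; constructor <;> nlinarith [hθ.1, hθ.2]

theorem mem_of_isCorner_of_vtx_mem_interior (hr : 0 < r) {p q : ℤ × ℤ}
    (hp : vtx r p ∈ interior (Rset r C)) (hq : isCorner p q) : q ∈ C := by
  -- points on the way from the vertex to the center of the cell `q` lie in the open cell `q`
  set m : E2 := pt (2 * r * q.1 + r) (2 * r * q.2 + r)
  have hγ : Tendsto (fun θ : ℝ => vtx r p + θ • (m - vtx r p)) (𝓝[>] 0) (𝓝 (vtx r p)) :=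
    ((by fun_prop : Continuous fun θ : ℝ => vtx r p + θ • (m - vtx r p)).tendsto' 0 _
      (by simp)).mono_left nhdsWithin_le_nhds
  obtain ⟨θ, hθR, hθ⟩ :=
    ((hγ.eventually (mem_interior_iff_mem_nhds.1 hp)).and (Ioo_mem_nhdsGT one_pos)).exists
  obtain ⟨q', hq'C, hcell⟩ := mem_iUnion₂.1 hθR
  obtain ⟨h₁, h₂, h₃, h₄⟩ := isCorner_iff_le.1 hq
  have : q' = q := Prod.ext
    (int_eq_of_mem_Icc_of_mem_Ioo hr hcell.1 (add_mul_sub_mem_Ioo hr h₁ h₂ hθ))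
    (int_eq_of_mem_Icc_of_mem_Ioo hr hcell.2 (add_mul_sub_mem_Ioo hr h₃ h₄ hθ))
  exact this ▸ hq'C

theorem mem_Icc_floor (hr : 0 < r) (y : ℝ) :
    y ∈ Icc (2 * r * ⌊y / (2 * r)⌋) (2 * r * ⌊y / (2 * r)⌋ + 2 * r) := by
  have hy : y = 2 * r * (y / (2 * r)) := by field_simp
  constructor
  · nlinarith [Int.floor_le (y / (2 * r))]
  · nlinarith [Int.lt_floor_add_one (y / (2 * r))]

theorem floor_div_mem_of_abs_lt (hr : 0 < r) {y : ℝ} {n : ℤ} (h : |y - 2 * r * n| < 2 * r) :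
    n - 1 ≤ ⌊y / (2 * r)⌋ ∧ ⌊y / (2 * r)⌋ ≤ n := by
  obtain ⟨h₁, h₂⟩ := abs_lt.1 h
  constructor
  · rw [Int.le_floor, le_div_iff₀ (by positivity)]; push_cast; linarith
  · rw [Int.floor_le_iff, div_lt_iff₀ (by positivity)]; linarith

theorem exists_cell_of_mem_sqO_vtx (hr : 0 < r) {p : ℤ × ℤ} (hp : vtx r p ∈ interior (Rset r C))
    {x : E2} (hx : x ∈ sqO (vtx r p) (2 * r)) : ∃ q ∈ C, isCorner p q ∧ x ∈ cell r q := by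
  obtain ⟨h₁, h₂⟩ := floor_div_mem_of_abs_lt hr hx.1
  obtain ⟨h₃, h₄⟩ := floor_div_mem_of_abs_lt hr hx.2
  have hq : isCorner p (⌊x 0 / (2 * r)⌋, ⌊x 1 / (2 * r)⌋) :=
    isCorner_iff_le.2 ⟨h₂, by dsimp only; omega, h₄, by dsimp only; omega⟩
  exact ⟨_, mem_of_isCorner_of_vtx_mem_interior hr hp hq, hq, mem_Icc_floor hr _,
    mem_Icc_floor hr _⟩

theorem vtx_add_smul_sub_add_smul_mem_Rnb (hr : 0 < r) {c : ℝ} (hcr : c < r) {p d : ℤ × ℤ}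
    (hd : d = (1,0) ∨ d = (0,1)) (hA : vtx r p ∈ interior (Rset r C))
    (hB : vtx r (p + d) ∈ interior (Rset r C)) {u s : ℝ} (hu : u ∈ Icc (0:ℝ) 1)
    (hs : s ∈ Icc (-c) c) :
    vtx r p + u • (vtx r (p + d) - vtx r p) + s • pt 1 1 ∈ Rnb r C p (p + d) := by
  set x := vtx r p + u • (vtx r (p + d) - vtx r p) + s • pt 1 1
  have hd' : ∀ i, 0 ≤ (vtx r (p + d) - vtx r p) i ∧ (vtx r (p + d) - vtx r p) i ≤ 2 * r := by
    intro i; fin_cases i <;> rcases hd with rfl | rfl <;> simp [vtx_sub_vtx, pt] <;> linarith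
  have hnear : ∀ w : ℝ, |w| ≤ r → |w + s| < 2 * r := fun w hw => by
    rw [abs_le] at hw; rw [abs_lt]; constructor <;> linarith [hs.1, hs.2]
  -- the first half of the strip lies near `A`, the second half near `B`
  have hx : x ∈ sqO (vtx r p) (2 * r) ∨ x ∈ sqO (vtx r (p + d)) (2 * r) := by
    have hxA : ∀ i, x i - vtx r p i = u * (vtx r (p + d) - vtx r p) i + s := fun i => by
      simp [x, pt_self_apply]; ring
    have hxB : ∀ i, x i - vtx r (p + d) i = (u - 1) * (vtx r (p + d) - vtx r p) i + s :=
      fun i => by simp [x, pt_self_apply]; ring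
    rcases le_total u (1 / 2) with h | h
    · left
      refine ⟨?_, ?_⟩ <;> rw [hxA] <;> refine hnear _ (abs_le.2 ⟨?_, ?_⟩) <;>
        nlinarith [hd' 0, hd' 1, hu.1]
    · right
      refine ⟨?_, ?_⟩ <;> rw [hxB] <;> refine hnear _ (abs_le.2 ⟨?_, ?_⟩) <;>
        nlinarith [hd' 0, hd' 1, hu.2]
  obtain ⟨q, hqC, hq, hxq⟩ : ∃ q ∈ C, (isCorner p q ∨ isCorner (p + d) q) ∧ x ∈ cell r q := by
    rcases hx with hx | hx
    · obtain ⟨q, hqC, hq, hxq⟩ := exists_cell_of_mem_sqO_vtx hr hA hx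
      exact ⟨q, hqC, Or.inl hq, hxq⟩
    · obtain ⟨q, hqC, hq, hxq⟩ := exists_cell_of_mem_sqO_vtx hr hB hx
      exact ⟨q, hqC, Or.inr hq, hxq⟩
  exact mem_iUnion₂.2 ⟨q, hqC, mem_iUnion.2 ⟨hq, hxq⟩⟩

theorem norm_vtx_sub_vtx_add_smul_le {c : ℝ} (hr : 0 < r) (hcr : c < r) {p d : ℤ × ℤ}
    (hd : d = (1,0) ∨ d = (0,1)) {t : ℝ} (ht : |t| ≤ 2 * c) :
    ‖vtx r (p + d) - vtx r p + t • pt 1 1‖ ≤ 2 * r + 5 / 4 * max t 0 := by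
  obtain ⟨ht₁, ht₂⟩ := abs_le.1 ht
  have hsq :
      ‖vtx r (p + d) - vtx r p + t • pt 1 1‖ ^ 2 = 4 * r ^ 2 + 4 * r * t + 2 * t ^ 2 := by
    rw [vtx_sub_vtx, pt_add_smul_pt, norm_pt, Real.sq_sqrt (by positivity)]
    rcases hd with rfl | rfl <;> simp <;> ring
  refine le_of_sq_le_sq ?_ (by positivity)
  rw [hsq]
  rcases le_total t 0 with h | h
  · rw [max_eq_right h]; nlinarith
  · rw [max_eq_left h]; nlinarith

end Grid

section ChangeOfVariables

theorem map_volume_add_smul_add_smul (A e v : E2) (h : e 0 * v 1 - v 0 * e 1 ≠ 0) :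
    (volume : Measure (ℝ × ℝ)).map (fun q => A + q.1 • e + q.2 • v) =
      ENNReal.ofReal |e 0 * v 1 - v 0 * e 1|⁻¹ • volume := by
  set L := Matrix.toLpLin 2 2 !![e 0, v 0; e 1, v 1]
  have hL : LinearMap.det L = e 0 * v 1 - v 0 * e 1 := by
    simp [L, Matrix.toLpLin_eq_toLin, LinearMap.det_toLin, Matrix.det_fin_two]
  have hLm : Measurable L := L.continuous_of_finiteDimensional.measurable
  have hJ : MeasurePreserving (fun q : ℝ × ℝ => pt q.1 q.2) :=
    (PiLp.volume_preserving_toLp (Fin 2)).comp (volume_preserving_finTwoArrow ℝ).symm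
  have hΦ : (fun q : ℝ × ℝ => A + q.1 • e + q.2 • v) = (A + ·) ∘ L ∘ (fun q => pt q.1 q.2) := by
    ext q i; fin_cases i <;> simp [L, pt] <;> ring
  rw [hΦ, ← Measure.map_map (by fun_prop) (hLm.comp hJ.measurable),
    ← Measure.map_map hLm hJ.measurable, hJ.map_eq,
    Measure.map_linearMap_addHaar_eq_smul_addHaar _ (by rwa [hL]), Measure.map_smul,
    map_add_left_eq_self, hL, abs_inv]

theorem lintegral_parallelogram_le {A e v : E2} (h : e 0 * v 1 - v 0 * e 1 ≠ 0)
    {g : E2 → ℝ≥0∞} (hg : Measurable g) {R : Set E2} (hR : MeasurableSet R) {c : ℝ}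
    (hAR : ∀ u ∈ Icc (0:ℝ) 1, ∀ s ∈ Icc (-c) c, A + u • e + s • v ∈ R) :
    ∫⁻ u in Icc (0:ℝ) 1, ∫⁻ s in Icc (-c) c, g (A + u • e + s • v)
      ≤ ENNReal.ofReal |e 0 * v 1 - v 0 * e 1|⁻¹ * ∫⁻ z in R, g z := by
  set Φ := fun q : ℝ × ℝ => A + q.1 • e + q.2 • v
  have hΦ : Measurable Φ := by fun_prop
  calc ∫⁻ u in Icc (0:ℝ) 1, ∫⁻ s in Icc (-c) c, g (Φ (u, s))
      = ∫⁻ q in Icc (0:ℝ) 1 ×ˢ Icc (-c) c, g (Φ q) := by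
        rw [Measure.volume_eq_prod, ← Measure.prod_restrict]
        exact (lintegral_prod _ (hg.comp hΦ).aemeasurable).symm
    _ ≤ ∫⁻ q in Φ ⁻¹' R, g (Φ q) := lintegral_mono_set fun q hq => hAR _ hq.1 _ hq.2
    _ = ∫⁻ z in R, g z ∂(volume.map Φ) := (setLIntegral_map hR hg hΦ).symm
    _ = _ := by
        rw [map_volume_add_smul_add_smul A e v h, Measure.restrict_smul, lintegral_smul_measure,
          smul_eq_mul]

end ChangeOfVariables

theorem statement_9_general (r : ℝ) (hr : 0 < r) (C : Finset (ℤ × ℤ)) (f : E2 → E2)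
    (hf : MemW11 (Rset r C) f) (ε : ℝ) (hε : 0 < ε) (hε1 : ε < 1)
    (p d : ℤ × ℤ) (hd : d = (1,0) ∨ d = (0,1))
    (hA : vtx r p ∈ interior (Rset r C)) (hB : vtx r (p + d) ∈ interior (Rset r C))
    (M : E2 →L[ℝ] E2) :
    μH[1] {x ∈ IsegA r ε (vtx r p) |
        μH[1] {y ∈ IsegA r ε (vtx r (p + d)) |
            ENNReal.ofReal ((25/(ε*r)) * ∫ z in Rnb r C p (p + d), ‖fderiv ℝ f z - M‖)
              < ∫⁻ t in segment ℝ x y, (‖fderiv ℝ f t - M‖₊ : ℝ≥0∞) ∂μH[1]}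
          > μH[1] (IsegA r ε (vtx r (p + d))) / 5}
      < μH[1] (IsegA r ε (vtx r p)) / 5 := by
  have hc : 0 < ε * r := mul_pos hε hr
  have hcr : ε * r < r := by nlinarith
  have hg : Measurable fun z => (‖fderiv ℝ f z - M‖₊ : ℝ≥0∞) :=
    ((measurable_fderiv ℝ f).sub measurable_const).nnnorm.coe_nnreal_ennreal
  have hint : IntegrableOn (fun z => fderiv ℝ f z - M) (Rnb r C p (p + d)) :=
    (hf.2.2.mono_set (Rnb_subset_Rset _ _)).sub (integrableOn_const (volume_Rnb_lt_top _ _).ne)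
  have hdet : |(vtx r (p + d) - vtx r p) 0 * pt 1 1 1 - pt 1 1 0 * (vtx r (p + d) - vtx r p) 1|
      = 2 * r := by
    rcases hd with rfl | rfl <;> simp [vtx_sub_vtx, pt_apply_zero, pt_apply_one, abs_of_pos hr]
  rw [ENNReal.ofReal_mul (by positivity), ofReal_integral_norm_eq_lintegral_enorm hint]
  have hv : pt 1 1 ≠ 0 := fun h => one_ne_zero (congrArg (fun x : E2 => x 0) h)
  refine hausdorffMeasure_manyHeavySegments_lt hv hg hc hcr
    (fun t ht => norm_vtx_sub_vtx_add_smul_le hr hcr hd ht) hint.2.ne ?_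
  have := lintegral_parallelogram_le (by rw [← abs_ne_zero, hdet]; positivity) hg
    (measurableSet_Rnb p (p + d)) fun u hu s hs =>
      vtx_add_smul_sub_add_smul_mem_Rnb hr hcr hd hA hB hu hs
  rwa [hdet] at this

/-- **Lemma (moving the vertices of the grid: sides of type A).** Let `Ω ⊆ ℝ²` be an `r`-set,
`f ∈ W^{1,1}(Ω, ℝ²)`, let `AB` be a side of type A of the grid (both endpoints in the interior
of `Ω`), let `ε ≪ 1` and `M ∈ ℝ^{2×2}`. With `ℛ` the union of the `6` squares of the grid
having `A` or `B` as a vertex and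
`Γ(A,B,M) = {(x,y) ∈ I_ε(A) × I_ε(B) : ∫_{xy} |Df − M| dℋ¹ > 25/(εr) ∫_ℛ |Df − M|}`, one has
`ℋ¹({x ∈ I_ε(A) : ℋ¹({y ∈ I_ε(B) : (x,y) ∈ Γ}) > ℋ¹(I_ε(B))/5}) < ℋ¹(I_ε(A))/5`. -/
theorem statement_9 (r : ℝ) (hr : 0 < r) (C : Finset (ℤ × ℤ)) (f : E2 → E2)
    (hf : MemW11 (Rset r C) f) (ε : ℝ) (hε : 0 < ε) (hε1 : ε < 1)
    (p d : ℤ × ℤ) (hd : d = (1,0) ∨ d = (0,1)) (hedge : isEdge C p (p + d))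
    (hA : vtx r p ∈ interior (Rset r C)) (hB : vtx r (p + d) ∈ interior (Rset r C))
    (M : E2 →L[ℝ] E2) :
    μH[1] {x ∈ IsegA r ε (vtx r p) |
        μH[1] {y ∈ IsegA r ε (vtx r (p + d)) |
            ENNReal.ofReal ((25/(ε*r)) * ∫ z in Rnb r C p (p + d), ‖fderiv ℝ f z - M‖)
              < ∫⁻ t in segment ℝ x y, (‖fderiv ℝ f t - M‖₊ : ℝ≥0∞) ∂μH[1]}
          > μH[1] (IsegA r ε (vtx r (p + d))) / 5}
      < μH[1] (IsegA r ε (vtx r p)) / 5 :=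
  statement_9_general r hr C f hf ε hε hε1 p d hd hA hB M

end
end

section
/- Let 𝒮₀ = {(x,y) ∈ ℝ² : |x|+|y| < 1} and let g : ∂𝒮₀ → ℝ² be piecewise linear and one-to-one with ∫_{∂𝒮₀}|Dg| dℋ¹ > 0. Then there exist two opposite points P₁, P₂ ∈ ∂𝒮₀ (i.e. P₂ = −P₁) such that for every r ∈ (0, √2) and each i ∈ {1, 2}, ∫_{B(P_i, r) ∩ ∂𝒮₀} |Dg| dℋ¹ ≤ 6r ∫_{∂𝒮₀} |Dg| dℋ¹. -/
set_option autoImplicit false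

open MeasureTheory Set Metric
open scoped ENNReal NNReal Classical

noncomputable section

/-- The open "rotated" square `𝒮₀ = {(x,y) : |x| + |y| < 1}`. -/
def S0 : Set E2 := {x | |x 0| + |x 1| < 1}

/-- The boundary `∂𝒮₀ = {(x,y) : |x| + |y| = 1}`. -/
def bdS0 : Set E2 := {x | |x 0| + |x 1| = 1}

/-- A choice of unit tangent vector at the points of `∂𝒮₀`: `(1,-1)/√2` on the two sides in
the first and third quadrants, `(1,1)/√2` on the two sides in the second and fourth quadrants
(the corners are `ℋ¹`-negligible). -/
def tauS0 (x : E2) : E2 :=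
  (Real.sqrt 2)⁻¹ • (if 0 ≤ x 0 * x 1 then pt 1 (-1) else pt 1 1)

/-! Let `ν` be the measure with density `|Dg|` on `∂𝒮₀`, of total mass `m > 0`. A point `P` is
bad if `ν(B(P, r)) > 6 r m` for some `r < √2`. Since `ℋ¹(B(x, ρ) ∩ ∂𝒮₀) ≤ 8ρ` (the boundary is
four segments), a Vitali covering of the bad points by disjoint bad balls, enlarged by the factor
`1 + 21/20`, shows that the bad points of `∂𝒮₀` have `ℋ¹`-measure at most
`8 · (41/20) / 6 = 41/15 < 2√2`. As `ℋ¹(∂𝒮₀) = 4√2`, the bad points and their opposites cannot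
cover `∂𝒮₀`. -/

open scoped Pointwise

theorem measure_setOf_exists_lt_measure_ball_le {X : Type*} [PseudoMetricSpace X]
    [TopologicalSpace.SeparableSpace X] [MeasurableSpace X] [OpensMeasurableSpace X]
    (μ ν : Measure X) {C c R τ : ℝ} (hc : 0 < c) (hτ : 1 < τ)
    (hμ : ∀ x ρ, μ (ball x ρ) ≤ ENNReal.ofReal (C * ρ)) :
    μ {x | ∃ r ∈ Ioo 0 R, ENNReal.ofReal (c * r) < ν (ball x r)} ≤
      ENNReal.ofReal (C * (1 + τ) / c) * ν univ := by
  set bad := {x | ∃ r ∈ Ioo 0 R, ENNReal.ofReal (c * r) < ν (ball x r)}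
  choose! rad hrad hlt using fun x (hx : x ∈ bad) => hx
  obtain ⟨u, hu, hdisj, hcover⟩ := Vitali.exists_disjoint_subfamily_covering_enlargement
    (fun x => ball x (rad x)) bad rad τ hτ (fun x hx => (hrad x hx).1.le) R
    (fun x hx => (hrad x hx).2.le) (fun x hx => nonempty_ball.2 (hrad x hx).1)
  have hcount : u.Countable := hdisj.countable_of_isOpen (fun _ _ => isOpen_ball)
    fun x hx => nonempty_ball.2 (hrad x (hu hx)).1
  have hbad : bad ⊆ ⋃ b ∈ u, ball b ((1 + τ) * rad b) := by
    intro a ha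
    obtain ⟨b, hb, ⟨z, hza, hzb⟩, hab⟩ := hcover a ha
    refine mem_biUnion hb (mem_ball.2 ?_)
    calc dist a b ≤ dist z a + dist z b := dist_triangle_left a b z
      _ < rad a + rad b := add_lt_add (mem_ball.1 hza) (mem_ball.1 hzb)
      _ ≤ (1 + τ) * rad b := by linarith
  have hball : ∀ b ∈ u, μ (ball b ((1 + τ) * rad b)) ≤
      ENNReal.ofReal (C * (1 + τ) / c) * ν (ball b (rad b)) := by
    intro b hb
    calc μ (ball b ((1 + τ) * rad b)) ≤ ENNReal.ofReal (C * (1 + τ) / c * (c * rad b)) := by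
          convert hμ b _ using 2; field_simp
      _ = ENNReal.ofReal (C * (1 + τ) / c) * ENNReal.ofReal (c * rad b) :=
          ENNReal.ofReal_mul' (mul_nonneg hc.le (hrad b (hu hb)).1.le)
      _ ≤ ENNReal.ofReal (C * (1 + τ) / c) * ν (ball b (rad b)) := by
          gcongr; exact (hlt b (hu hb)).le
  calc μ bad ≤ μ (⋃ b ∈ u, ball b ((1 + τ) * rad b)) := measure_mono hbad
    _ ≤ ∑' b : u, μ (ball b ((1 + τ) * rad b)) := measure_biUnion_le μ hcount _
    _ ≤ ∑' b : u, ENNReal.ofReal (C * (1 + τ) / c) * ν (ball b (rad b)) :=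
        ENNReal.tsum_le_tsum fun b => hball b b.2
    _ = ENNReal.ofReal (C * (1 + τ) / c) * ν (⋃ b ∈ u, ball b (rad b)) := by
        rw [ENNReal.tsum_mul_left, measure_biUnion hcount hdisj fun _ _ => measurableSet_ball]
    _ ≤ ENNReal.ofReal (C * (1 + τ) / c) * ν univ := by gcongr; exact subset_univ _

theorem ofReal_setIntegral_eq_withDensity_apply {α : Type*} [MeasurableSpace α] {μ : Measure α}
    {f : α → ℝ} (hf : Integrable f μ) (hf0 : 0 ≤ f) {s : Set α} (hs : MeasurableSet s) :
    ENNReal.ofReal (∫ x in s, f x ∂μ) = μ.withDensity (fun x => ENNReal.ofReal (f x)) s := by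
  rw [withDensity_apply _ hs, ofReal_integral_eq_lintegral_ofReal hf.restrict (ae_of_all _ hf0)]

section Segment

variable {E : Type*} [NormedAddCommGroup E] [NormedSpace ℝ E] [MeasurableSpace E] [BorelSpace E]

theorem hausdorffMeasure_one_le_ediam_of_subset_segment {A B : E} {t : Set E}
    (ht : t ⊆ segment ℝ A B) : μH[1] t ≤ ediam t := by
  rcases eq_or_ne A B with rfl | hAB
  · rw [measure_mono_null ht (by simpa using hausdorffMeasure_segment A A)]
    exact zero_le
  set u : E := ‖B - A‖⁻¹ • (B - A)
  have hAB' : 0 < ‖B - A‖ := norm_pos_iff.2 (sub_ne_zero.2 hAB.symm)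
  have hu : ‖u‖ = 1 := by simp [u, norm_smul, hAB'.ne']
  have hφ : Isometry fun s : ℝ => A + s • u := Isometry.of_dist_eq fun s s' => by
    rw [dist_add_left, dist_eq_norm, ← sub_smul, norm_smul, hu, mul_one, Real.norm_eq_abs,
      Real.dist_eq]
  have hrange : t ⊆ range fun s : ℝ => A + s • u := by
    intro x hx
    obtain ⟨θ, -, rfl⟩ := (segment_eq_image' ℝ A B).subset (ht hx)
    exact ⟨θ * ‖B - A‖, by simp [u, smul_smul, hAB'.ne']⟩
  obtain ⟨s, rfl⟩ := subset_range_iff_exists_image_eq.1 hrange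
  rw [hφ.hausdorffMeasure_image (Or.inl zero_le_one), hφ.ediam_image, hausdorffMeasure_real]
  exact Real.volume_le_diam s

theorem hausdorffMeasure_ball_inter_segment_le (x A B : E) (ρ : ℝ) :
    μH[1] (ball x ρ ∩ segment ℝ A B) ≤ ENNReal.ofReal (2 * ρ) :=
  (hausdorffMeasure_one_le_ediam_of_subset_segment inter_subset_right).trans <|
    ediam_le_of_forall_dist_le fun y hy z hz => by
      linarith [dist_triangle_right y z x, mem_ball.1 hy.1, mem_ball.1 hz.1]

theorem hausdorffMeasure_ball_inter_le_of_subset_iUnion_segment {ι : Type*} [Fintype ι]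
    {S : Set E} {P Q : ι → E} (hS : S ⊆ ⋃ i, segment ℝ (P i) (Q i)) (x : E) (ρ : ℝ) :
    μH[1] (ball x ρ ∩ S) ≤ Fintype.card ι * ENNReal.ofReal (2 * ρ) :=
  calc μH[1] (ball x ρ ∩ S) ≤ μH[1] (⋃ i, ball x ρ ∩ segment ℝ (P i) (Q i)) := by
        rw [← inter_iUnion]; exact measure_mono (inter_subset_inter_right _ hS)
    _ ≤ ∑ i, μH[1] (ball x ρ ∩ segment ℝ (P i) (Q i)) := measure_iUnion_fintype_le _ _
    _ ≤ ∑ _i : ι, ENNReal.ofReal (2 * ρ) :=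
        Finset.sum_le_sum fun i _ => hausdorffMeasure_ball_inter_segment_le x _ _ ρ
    _ = Fintype.card ι * ENNReal.ofReal (2 * ρ) := by simp

end Segment

def boolSign (b : Bool) : ℝ := if b then 1 else -1

theorem abs_mul_boolSign_decide (t : ℝ) : |t| * boolSign (decide (0 ≤ t)) = t := by
  by_cases ht : 0 ≤ t <;> simp [boolSign, ht, abs_of_nonneg, abs_of_neg, not_le.1]

theorem eq_of_pos_boolSign_mul {s s' : Bool} {t : ℝ} (h : 0 < boolSign s * t)
    (h' : 0 < boolSign s' * t) : s = s' := by
  cases s <;> cases s' <;> norm_num [boolSign] at h h' ⊢ <;> linarith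

theorem measurableSet_bdS0 : MeasurableSet bdS0 :=
  (isClosed_eq (by fun_prop) continuous_const).measurableSet

theorem neg_mem_bdS0 {x : E2} (hx : x ∈ bdS0) : -x ∈ bdS0 := by
  simpa [bdS0] using hx

theorem bdS0_subset_iUnion_segment :
    bdS0 ⊆ ⋃ p : Bool × Bool, segment ℝ (pt (boolSign p.1) 0) (pt 0 (boolSign p.2)) := by
  intro x hx
  refine mem_iUnion.2 ⟨(decide (0 ≤ x 0), decide (0 ≤ x 1)),
    |x 0|, |x 1|, abs_nonneg _, abs_nonneg _, hx, ?_⟩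
  ext i
  fin_cases i <;> simp [pt, abs_mul_boolSign_decide]

theorem hausdorffMeasure_ball_inter_bdS0_le (x : E2) (ρ : ℝ) :
    μH[1] (ball x ρ ∩ bdS0) ≤ ENNReal.ofReal (8 * ρ) := by
  refine (hausdorffMeasure_ball_inter_le_of_subset_iUnion_segment
    bdS0_subset_iUnion_segment x ρ).trans_eq ?_
  rw [show (8 : ℝ) * ρ = 4 * (2 * ρ) by ring, ENNReal.ofReal_mul (by norm_num)]
  simp

theorem ofReal_sqrt_two_le_hausdorffMeasure_quadrant {a b : ℝ} (ha : |a| = 1) (hb : |b| = 1) :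
    ENNReal.ofReal √2 ≤ μH[1] {x ∈ bdS0 | 0 < a * x 0 ∧ 0 < b * x 1} := by
  have hside : openSegment ℝ (pt a 0) (pt 0 b) ⊆ {x ∈ bdS0 | 0 < a * x 0 ∧ 0 < b * x 1} := by
    rintro _ ⟨s, t, hs, ht, hst, rfl⟩
    have ha2 : a * a = 1 := by rw [← abs_mul_abs_self, ha, one_mul]
    have hb2 : b * b = 1 := by rw [← abs_mul_abs_self, hb, one_mul]
    refine ⟨?_, ?_, ?_⟩ <;> simp [pt, bdS0, abs_mul, ha, hb, abs_of_pos, hs, ht]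
    all_goals nlinarith
  refine le_trans (le_of_eq ?_) (measure_mono hside)
  rw [openSegment_eq_image_lineMap, hausdorffMeasure_lineMap_image, hausdorffMeasure_real,
    Real.volume_Ioo, sub_zero, ENNReal.ofReal_one, ENNReal.smul_def, smul_eq_mul, mul_one,
    ← edist_nndist, edist_dist, EuclideanSpace.dist_eq]
  simp [pt, Real.dist_eq, ← sq_abs a, ← sq_abs b, ha, hb]
  norm_num

theorem ofReal_four_mul_sqrt_two_le_hausdorffMeasure_bdS0 :
    ENNReal.ofReal (4 * √2) ≤ μH[1] bdS0 := by
  set Q : Bool × Bool → Set E2 :=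
    fun p => {x ∈ bdS0 | 0 < boolSign p.1 * x 0 ∧ 0 < boolSign p.2 * x 1}
  have hdisj : Pairwise (Function.onFun Disjoint Q) := fun p q hpq => disjoint_left.2
    fun x ⟨_, hp1, hp2⟩ ⟨_, hq1, hq2⟩ =>
      hpq (Prod.ext (eq_of_pos_boolSign_mul hp1 hq1) (eq_of_pos_boolSign_mul hp2 hq2))
  have hmeas : ∀ p, MeasurableSet (Q p) := fun p => measurableSet_bdS0.inter
    ((measurableSet_lt (g := fun x : E2 => boolSign p.1 * x 0) measurable_const (by fun_prop)).inter
      (measurableSet_lt (g := fun x : E2 => boolSign p.2 * x 1) measurable_const (by fun_prop)))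
  have hsign : ∀ s, |boolSign s| = 1 := fun s => by cases s <;> simp [boolSign]
  calc ENNReal.ofReal (4 * √2) = ∑ _p : Bool × Bool, ENNReal.ofReal √2 := by
        rw [ENNReal.ofReal_mul (by norm_num)]; simp
    _ ≤ ∑ p, μH[1] (Q p) := Finset.sum_le_sum fun p _ =>
        ofReal_sqrt_two_le_hausdorffMeasure_quadrant (hsign p.1) (hsign p.2)
    _ = μH[1] (⋃ p, Q p) := by rw [measure_iUnion hdisj hmeas, tsum_fintype]
    _ ≤ μH[1] bdS0 := measure_mono (iUnion_subset fun p => sep_subset _ _)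

theorem exists_mem_bdS0_notMem_and_neg_notMem {B : Set E2}
    (hB : μH[1] (B ∩ bdS0) < ENNReal.ofReal (2 * √2)) : ∃ P ∈ bdS0, P ∉ B ∧ -P ∉ B := by
  by_contra! h
  have hcover : bdS0 ⊆ (B ∩ bdS0) ∪ -(B ∩ bdS0) := fun P hP => by
    by_cases hPB : P ∈ B
    · exact Or.inl ⟨hPB, hP⟩
    · exact Or.inr ⟨h P hP hPB, neg_mem_bdS0 hP⟩
  have hneg : μH[1] (-(B ∩ bdS0)) = μH[1] (B ∩ bdS0) := by
    rw [← image_neg_eq_neg]; exact (IsometryEquiv.neg E2).hausdorffMeasure_image 1 _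
  refine (ofReal_four_mul_sqrt_two_le_hausdorffMeasure_bdS0.trans_lt ?_).false
  calc μH[1] bdS0 ≤ μH[1] (B ∩ bdS0) + μH[1] (-(B ∩ bdS0)) :=
        (measure_mono hcover).trans (measure_union_le _ _)
    _ < ENNReal.ofReal (2 * √2) + ENNReal.ofReal (2 * √2) := by
        rw [hneg]; exact ENNReal.add_lt_add hB hB
    _ = ENNReal.ofReal (4 * √2) := by
        rw [← ENNReal.ofReal_add (by positivity) (by positivity)]; ring_nf

theorem hausdorffMeasure_setOf_exists_lt_measure_ball_inter_bdS0_lt (ν : Measure E2) {m : ℝ}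
    (hm : 0 < m) (hν : ν univ ≤ ENNReal.ofReal m) :
    μH[1] ({x | ∃ r ∈ Ioo 0 √2, ENNReal.ofReal (6 * m * r) < ν (ball x r)} ∩ bdS0) <
      ENNReal.ofReal (2 * √2) := by
  rw [← Measure.restrict_apply' measurableSet_bdS0]
  have hball : ∀ x ρ, μH[1].restrict bdS0 (ball x ρ) ≤ ENNReal.ofReal (8 * ρ) := fun x ρ =>
    (Measure.restrict_apply' measurableSet_bdS0).trans_le (hausdorffMeasure_ball_inter_bdS0_le x ρ)
  refine (measure_setOf_exists_lt_measure_ball_le _ ν (by positivity)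
    (by norm_num : (1 : ℝ) < 21 / 20) hball).trans_lt ?_
  have hsqrt : (41 / 30 : ℝ) < √2 := Real.lt_sqrt (by norm_num) |>.2 (by norm_num)
  calc ENNReal.ofReal (8 * (1 + 21 / 20) / (6 * m)) * ν univ
      ≤ ENNReal.ofReal (8 * (1 + 21 / 20) / (6 * m)) * ENNReal.ofReal m := by gcongr
    _ = ENNReal.ofReal (41 / 15) := by
      rw [← ENNReal.ofReal_mul (by positivity)]; congr 1; field_simp; norm_num
    _ < ENNReal.ofReal (2 * √2) := (ENNReal.ofReal_lt_ofReal_iff (by positivity)).2 (by linarith)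

theorem statement_19_general (g : E2 → E2)
    (hpos : 0 < ∫ t in bdS0, ‖lineDeriv ℝ g t (tauS0 t)‖ ∂μH[1]) :
    ∃ P : E2, P ∈ bdS0 ∧
      ∀ r ∈ Ioo (0:ℝ) (Real.sqrt 2), ∀ P' ∈ ({P, -P} : Set E2),
        (∫ t in Metric.ball P' r ∩ bdS0, ‖lineDeriv ℝ g t (tauS0 t)‖ ∂μH[1]) ≤
          6 * r * ∫ t in bdS0, ‖lineDeriv ℝ g t (tauS0 t)‖ ∂μH[1] := by
  set F : E2 → ℝ := fun t => ‖lineDeriv ℝ g t (tauS0 t)‖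
  set m := ∫ t in bdS0, F t ∂μH[1]
  have hF : Integrable F (μH[1].restrict bdS0) := by
    by_contra h
    exact hpos.ne' (integral_undef h)
  set ν := (μH[1].restrict bdS0).withDensity fun t => ENNReal.ofReal (F t)
  have hν : ∀ s, MeasurableSet s → ENNReal.ofReal (∫ t in s ∩ bdS0, F t ∂μH[1]) = ν s :=
    fun s hs => by
      rw [← Measure.restrict_restrict hs,
        ofReal_setIntegral_eq_withDensity_apply hF (fun _ => norm_nonneg _) hs]
  set bad := {x | ∃ r ∈ Ioo 0 √2, ENNReal.ofReal (6 * m * r) < ν (ball x r)}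
  obtain ⟨P, hP, hPbad, hnegPbad⟩ := exists_mem_bdS0_notMem_and_neg_notMem
    (hausdorffMeasure_setOf_exists_lt_measure_ball_inter_bdS0_lt ν hpos
      (by rw [← hν _ MeasurableSet.univ, univ_inter]))
  refine ⟨P, hP, fun r hr P' hP' => ?_⟩
  have hP'bad : P' ∉ bad := by rcases hP' with rfl | rfl <;> assumption
  have hle : ν (ball P' r) ≤ ENNReal.ofReal (6 * m * r) := not_lt.1 fun h => hP'bad ⟨r, hr, h⟩
  rw [← ENNReal.ofReal_le_ofReal_iff (by have := hr.1; positivity), hν _ measurableSet_ball]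
  rwa [mul_right_comm]

/-- **Step (choice of good corners).** Let `g : ∂𝒮₀ → ℝ²` be piecewise linear and one-to-one,
with `∫_{∂𝒮₀} |Dg| dℋ¹ > 0`. Then there are two opposite points `P, −P ∈ ∂𝒮₀` such that for
every `r ∈ (0, √2)` one has `∫_{B(P,r) ∩ ∂𝒮₀} |Dg| dℋ¹ ≤ 6r ∫_{∂𝒮₀} |Dg| dℋ¹`, and the same
holds for `−P`. -/
theorem statement_19 (g : E2 → E2) (hpl : PiecewiseLinearOn g bdS0) (hinj : InjOn g bdS0)
    (hpos : 0 < ∫ t in bdS0, ‖lineDeriv ℝ g t (tauS0 t)‖ ∂μH[1]) :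
    ∃ P : E2, P ∈ bdS0 ∧
      ∀ r ∈ Ioo (0:ℝ) (Real.sqrt 2), ∀ P' ∈ ({P, -P} : Set E2),
        (∫ t in Metric.ball P' r ∩ bdS0, ‖lineDeriv ℝ g t (tauS0 t)‖ ∂μH[1]) ≤
          6 * r * ∫ t in bdS0, ‖lineDeriv ℝ g t (tauS0 t)‖ ∂μH[1] :=
  statement_19_general g hpos

end
end
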